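/- For any B > 0 and integers M, L, the symmetry identity ∫₀^{2π} J_{2M}(B sin(x/2)) e^{−iLx} dx = ∫₀^{2π} J_{2L}(B sin t) e^{−i2Mt} dt holds, where J_n is the Bessel function of the first kind given by its integral representation. -/
import Mathlib


open Real Complex intervalIntegral

noncomputable def besselJ (n : ℤ) (y : ℝ) : ℂ :=
  (1 / (2 * π)) * ∫ s in (0:ℝ)..(2 * π),
    Complex.exp (Complex.I * y * Real.sin s - Complex.I * n * s)

lemma exp_aux (k : ℤ) {a b : ℂ} (h : a = b + k * (2 * π * Complex.I)) :
    Complex.exp a = Complex.exp b := by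
  rw [h, Complex.exp_add, Complex.exp_int_mul_two_pi_mul_I, mul_one]

lemma besselJ_continuous (n : ℤ) : Continuous (besselJ n) := by
  unfold besselJ
  exact continuous_const.mul
    (intervalIntegral.continuous_parametric_intervalIntegral_of_continuous'
      (f := fun (y : ℝ) (s : ℝ) =>
        Complex.exp (Complex.I * y * Real.sin s - Complex.I * n * s))
      (by fun_prop) 0 (2 * π))

lemma besselJ_even (M : ℤ) (y : ℝ) : besselJ (2 * M) (-y) = besselJ (2 * M) y := by
  unfold besselJ
  congr 1
  set h : ℝ → ℂ := fun s =>
    Complex.exp (Complex.I * (-y : ℝ) * Real.sin s - Complex.I * ((2 * M : ℤ) : ℂ) * s) with hh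
  have hper : Function.Periodic h (2 * π) := by
    intro s
    simp only [hh]
    rw [Real.sin_add_two_pi]
    apply exp_aux (-2 * M)
    push_cast
    ring
  have key : (∫ s in (0:ℝ)..(2 * π), h s) = ∫ s in (π:ℝ)..(π + 2 * π), h s := by
    simpa using (hper.intervalIntegral_add_eq 0 π)
  have shift : (∫ s in (0:ℝ)..(2 * π), h (s + π)) = ∫ s in (π:ℝ)..(π + 2 * π), h s := by
    have := intervalIntegral.integral_comp_add_right (a := (0:ℝ)) (b := 2 * π) h π
    simpa [zero_add, add_comm] using this
  calc (∫ s in (0:ℝ)..(2 * π), h s)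
      = ∫ s in (0:ℝ)..(2 * π), h (s + π) := by rw [shift, key]
    _ = _ := by
        apply intervalIntegral.integral_congr
        intro s _
        simp only [hh]
        rw [Real.sin_add_pi]
        apply exp_aux (-M)
        push_cast
        ring

/-- Expansion of the single integral as a double integral. -/
lemma besselJ_int_expand (B : ℝ) (P Q : ℤ) :
    (∫ t in (0:ℝ)..(2 * π),
        besselJ (2 * P) (B * Real.sin t) * Complex.exp (-Complex.I * (2 * Q) * t)) =
    (1 / (2 * (π:ℝ)) : ℂ) * ∫ t in (0:ℝ)..(2 * π), ∫ s in (0:ℝ)..(2 * π),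
        Complex.exp (Complex.I * B * (Real.sin t * Real.sin s)
          - Complex.I * ((2 * P : ℤ) : ℂ) * s - Complex.I * (2 * (Q : ℂ)) * t) := by
  have step : ∀ t : ℝ, besselJ (2 * P) (B * Real.sin t) * Complex.exp (-Complex.I * (2 * Q) * t)
      = (1 / (2 * (π:ℝ)) : ℂ) * ∫ s in (0:ℝ)..(2 * π),
          Complex.exp (Complex.I * B * (Real.sin t * Real.sin s)
            - Complex.I * ((2 * P : ℤ) : ℂ) * s - Complex.I * (2 * (Q : ℂ)) * t) := by
    intro t
    unfold besselJ
    rw [mul_assoc]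
    congr 1
    rw [← intervalIntegral.integral_mul_const]
    apply intervalIntegral.integral_congr
    intro s _
    simp only []
    rw [← Complex.exp_add]
    congr 1
    push_cast
    ring
  rw [intervalIntegral.integral_congr (fun t _ => step t),
    intervalIntegral.integral_const_mul]

lemma double_swap (B : ℝ) (P Q : ℤ) :
    (∫ t in (0:ℝ)..(2 * π), ∫ s in (0:ℝ)..(2 * π),
        Complex.exp (Complex.I * B * (Real.sin t * Real.sin s)
          - Complex.I * ((2 * P : ℤ) : ℂ) * s - Complex.I * (2 * (Q : ℂ)) * t)) =
    (∫ t in (0:ℝ)..(2 * π), ∫ s in (0:ℝ)..(2 * π),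
        Complex.exp (Complex.I * B * (Real.sin t * Real.sin s)
          - Complex.I * ((2 * Q : ℤ) : ℂ) * s - Complex.I * (2 * (P : ℂ)) * t)) := by
  have h2 : (0:ℝ) ≤ 2 * π := by positivity
  have hfc' : Continuous (Function.uncurry fun s t : ℝ =>
      Complex.exp (Complex.I * B * (Real.sin t * Real.sin s)
        - Complex.I * ((2 * P : ℤ) : ℂ) * s - Complex.I * (2 * (Q : ℂ)) * t)) := by
    have huc : (Function.uncurry fun s t : ℝ =>
        Complex.exp (Complex.I * B * (Real.sin t * Real.sin s)
          - Complex.I * ((2 * P : ℤ) : ℂ) * s - Complex.I * (2 * (Q : ℂ)) * t))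
        = fun p : ℝ × ℝ => Complex.exp (Complex.I * B * (Real.sin p.2 * Real.sin p.1)
          - Complex.I * ((2 * P : ℤ) : ℂ) * p.1 - Complex.I * (2 * (Q : ℂ)) * p.2) := rfl
    rw [huc]
    apply Complex.continuous_exp.comp
    apply Continuous.sub
    apply Continuous.sub
    · fun_prop
    · fun_prop
    · fun_prop
  have swap : (∫ t in (0:ℝ)..(2 * π), ∫ s in (0:ℝ)..(2 * π),
        Complex.exp (Complex.I * B * (Real.sin t * Real.sin s)
          - Complex.I * ((2 * P : ℤ) : ℂ) * s - Complex.I * (2 * (Q : ℂ)) * t))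
      = ∫ s in (0:ℝ)..(2 * π), ∫ t in (0:ℝ)..(2 * π),
        Complex.exp (Complex.I * B * (Real.sin t * Real.sin s)
          - Complex.I * ((2 * P : ℤ) : ℂ) * s - Complex.I * (2 * (Q : ℂ)) * t) := by
    simp only [intervalIntegral.integral_of_le h2]
    rw [← MeasureTheory.integral_integral_swap]
    rw [MeasureTheory.Measure.prod_restrict]
    exact ((hfc'.locallyIntegrable
        (μ := (MeasureTheory.volume : MeasureTheory.Measure (ℝ × ℝ)))).integrableOn_isCompact
      (isCompact_Icc.prod isCompact_Icc)).mono_set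
      (Set.prod_mono Set.Ioc_subset_Icc_self Set.Ioc_subset_Icc_self)
  rw [swap]
  apply intervalIntegral.integral_congr
  intro a _
  apply intervalIntegral.integral_congr
  intro b _
  simp only []
  congr 1
  push_cast
  rw [mul_comm (Complex.sin (b:ℂ)) (Complex.sin (a:ℂ)), sub_right_comm]

/-- For B > 0 and integers M, L:
∫₀^{2π} J_{2M}(B sin(x/2)) e^{−iLx} dx = ∫₀^{2π} J_{2L}(B sin t) e^{−i2Mt} dt. -/
theorem stmt8 (B : ℝ) (hB : 0 < B) (M L : ℤ) :
    (∫ x in (0:ℝ)..(2 * π),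
        besselJ (2 * M) (B * Real.sin (x / 2)) * Complex.exp (-Complex.I * L * x)) =
    ∫ t in (0:ℝ)..(2 * π),
        besselJ (2 * L) (B * Real.sin t) * Complex.exp (-Complex.I * (2 * M) * t) := by
  set g : ℝ → ℂ := fun u =>
    besselJ (2 * M) (B * Real.sin u) * Complex.exp (-Complex.I * (2 * L) * u) with hg
  have hgc : Continuous g := by
    apply Continuous.mul
    · exact (besselJ_continuous (2 * M)).comp (by fun_prop)
    · apply Complex.continuous_exp.comp
      fun_prop
  have hper : Function.Periodic g π := by
    intro u
    simp only [hg]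
    rw [Real.sin_add_pi, mul_neg, besselJ_even]
    congr 1
    apply exp_aux (-L)
    push_cast
    ring
  have step1 : (∫ x in (0:ℝ)..(2 * π),
        besselJ (2 * M) (B * Real.sin (x / 2)) * Complex.exp (-Complex.I * L * x))
      = ∫ x in (0:ℝ)..(2 * π), g (x / 2) := by
    apply intervalIntegral.integral_congr
    intro x _
    simp only [hg]
    congr 2
    push_cast
    ring
  have step2 : (∫ x in (0:ℝ)..(2 * π), g (x / 2)) = (2 : ℝ) • ∫ u in (0:ℝ)..π, g u := by
    have h := intervalIntegral.integral_comp_div (a := (0:ℝ)) (b := 2 * π) (c := (2:ℝ)) g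
      two_ne_zero
    have e1 : (0:ℝ) / 2 = 0 := by norm_num
    have e2 : (2 * π) / 2 = π := by ring
    rw [e1, e2] at h
    exact h
  have step3 : (2 : ℝ) • (∫ u in (0:ℝ)..π, g u) = ∫ u in (0:ℝ)..(2 * π), g u := by
    have hadd : (∫ u in (0:ℝ)..π, g u) + (∫ u in (π:ℝ)..(2 * π), g u)
        = ∫ u in (0:ℝ)..(2 * π), g u :=
      intervalIntegral.integral_add_adjacent_intervals
        (hgc.intervalIntegrable 0 π) (hgc.intervalIntegrable π (2 * π))
    have hshift : (∫ u in (π:ℝ)..(2 * π), g u) = ∫ u in (0:ℝ)..π, g u := by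
      have := hper.intervalIntegral_add_eq π 0
      simpa [two_mul] using this
    rw [← hadd, hshift]
    simp [two_smul]
  rw [step1, step2, step3]
  have hL : (∫ u in (0:ℝ)..(2 * π), g u) =
      (1 / (2 * (π:ℝ)) : ℂ) * ∫ t in (0:ℝ)..(2 * π), ∫ s in (0:ℝ)..(2 * π),
        Complex.exp (Complex.I * B * (Real.sin t * Real.sin s)
          - Complex.I * ((2 * M : ℤ) : ℂ) * s - Complex.I * (2 * (L : ℂ)) * t) := by
    simp only [hg]
    exact besselJ_int_expand B M L
  have hR := besselJ_int_expand B L M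
  rw [hL, hR, double_swap B M L]
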